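/- arXiv:1512.08203 — 6 statements merged into one kernel-verified Lean document; each statement's English description precedes it below -/
import Mathlib

section
/- Let n ≥ 1 and consider the operators D_s = Σ_{j=1}^n (i q_j ∂_{y_j} − ∂_{x_j} ∂_{q_j}), E = Σ_{j=1}^n (x_j ∂_{x_j} + y_j ∂_{y_j}), and X_s = Σ_{j=1}^n (i x_j q_j + y_j ∂_{q_j}) acting on ℂ[x_1,…,x_n, y_1,…,y_n, q_1,…,q_n]. Then the commutator [X_s, D_s] equals i(E + n), where n denotes n times the identity. -/
noncomputable section
open MvPolynomial

/-- Variables: x_1..x_n (inl), y_1..y_n (inr inl), q_1..q_n (inr inr). -/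
abbrev V3 (n : ℕ) := Fin n ⊕ Fin n ⊕ Fin n
abbrev R3 (n : ℕ) := MvPolynomial (V3 n) ℂ
abbrev Op3 (n : ℕ) := Module.End ℂ (R3 n)

def mX {n : ℕ} (j : Fin n) : Op3 n := LinearMap.mulLeft ℂ (X (Sum.inl j))
def mY {n : ℕ} (j : Fin n) : Op3 n := LinearMap.mulLeft ℂ (X (Sum.inr (Sum.inl j)))
def mQ {n : ℕ} (j : Fin n) : Op3 n := LinearMap.mulLeft ℂ (X (Sum.inr (Sum.inr j)))
def dX {n : ℕ} (j : Fin n) : Op3 n := (pderiv (Sum.inl j)).toLinearMap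
def dY {n : ℕ} (j : Fin n) : Op3 n := (pderiv (Sum.inr (Sum.inl j))).toLinearMap
def dQ {n : ℕ} (j : Fin n) : Op3 n := (pderiv (Sum.inr (Sum.inr j))).toLinearMap

lemma pd_comm {σ R : Type*} [CommSemiring R] (v w : σ) (f : MvPolynomial σ R) :
    pderiv v (pderiv w f) = pderiv w (pderiv v f) := by
  classical
  induction f using MvPolynomial.induction_on with
  | C a => simp
  | add p q hp hq => simp [hp, hq]
  | mul_X p j hp =>
      simp only [pderiv_mul, pderiv_X, Pi.single_apply, map_add, hp, ite_mul, one_mul, zero_mul,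
        apply_ite (pderiv v), apply_ite (pderiv w), map_zero, pderiv_one, mul_zero, ite_self]
      abel

lemma diag {n : ℕ} (j : Fin n) :
    (Complex.I • (mX j * mQ j) + mY j * dQ j) * (Complex.I • (mQ j * dY j) - dX j * dQ j)
      - (Complex.I • (mQ j * dY j) - dX j * dQ j) * (Complex.I • (mX j * mQ j) + mY j * dQ j)
      = Complex.I • (mX j * dX j + mY j * dY j + 1) := by
  apply LinearMap.ext; intro f
  simp only [mX, mY, mQ, dX, dY, dQ, Module.End.mul_apply, LinearMap.mulLeft_apply,
    LinearMap.smul_apply, LinearMap.sub_apply, LinearMap.add_apply, Module.End.one_apply,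
    Derivation.coeFn_coe, map_sub, map_add, map_smul, pderiv_mul, pderiv_X,
    Pi.single_apply, smul_sub, smul_add]
  simp only [Sum.inl.injEq, Sum.inr.injEq, reduceCtorEq, if_true, if_false, ite_self,
    one_mul, zero_mul, mul_zero, add_zero, zero_add, if_pos rfl]
  simp only [map_zero, pderiv_one, smul_zero, mul_zero, zero_mul, add_zero, zero_add,
    sub_zero, pd_comm (Sum.inr (Sum.inr j)) (Sum.inl j),
    pd_comm (Sum.inr (Sum.inr j)) (Sum.inr (Sum.inl j)), smul_eq_C_mul]
  ring

lemma offdiag {n : ℕ} {j k : Fin n} (h : j ≠ k) :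
    (Complex.I • (mX j * mQ j) + mY j * dQ j) * (Complex.I • (mQ k * dY k) - dX k * dQ k)
      = (Complex.I • (mQ k * dY k) - dX k * dQ k) * (Complex.I • (mX j * mQ j) + mY j * dQ j) := by
  apply LinearMap.ext; intro f
  simp only [mX, mY, mQ, dX, dY, dQ, Module.End.mul_apply, LinearMap.mulLeft_apply,
    LinearMap.smul_apply, LinearMap.sub_apply, LinearMap.add_apply,
    Derivation.coeFn_coe, map_sub, map_add, map_smul, pderiv_mul, pderiv_X,
    Pi.single_apply, smul_sub, smul_add]
  simp only [Sum.inl.injEq, Sum.inr.injEq, reduceCtorEq, if_true, if_false, ite_self,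
    h, h.symm, if_neg, one_mul, zero_mul, mul_zero, add_zero, zero_add,
    map_zero, pderiv_one, smul_zero, sub_zero,
    pd_comm (Sum.inr (Sum.inr j)) (Sum.inl k),
    pd_comm (Sum.inr (Sum.inr j)) (Sum.inr (Sum.inl k)),
    pd_comm (Sum.inr (Sum.inr j)) (Sum.inr (Sum.inr k)), smul_eq_C_mul]
  ring

/-- The symplectic Dirac operator D_s = Σ_j (i q_j ∂_{y_j} − ∂_{x_j} ∂_{q_j}). -/
def Ds (n : ℕ) : Op3 n := ∑ j : Fin n, (Complex.I • (mQ j * dY j) - dX j * dQ j)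
/-- The Euler operator E = Σ_j (x_j ∂_{x_j} + y_j ∂_{y_j}). -/
def Eop (n : ℕ) : Op3 n := ∑ j : Fin n, (mX j * dX j + mY j * dY j)
/-- X_s = Σ_j (i x_j q_j + y_j ∂_{q_j}). -/
def Xs (n : ℕ) : Op3 n := ∑ j : Fin n, (Complex.I • (mX j * mQ j) + mY j * dQ j)

/-- [X_s, D_s] = i (E + n). -/
theorem commutator_Xs_Ds (n : ℕ) (hn : 1 ≤ n) :
    Xs n * Ds n - Ds n * Xs n = Complex.I • (Eop n + (n : Op3 n)) := by
  rw [Xs, Ds, Finset.sum_mul_sum, Finset.sum_mul_sum, Finset.sum_comm (s := Finset.univ)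
    (t := Finset.univ)]
  simp only [← Finset.sum_sub_distrib]
  have : ∀ j : Fin n, ∑ k : Fin n,
      ((Complex.I • (mX j * mQ j) + mY j * dQ j) * (Complex.I • (mQ k * dY k) - dX k * dQ k)
        - (Complex.I • (mQ k * dY k) - dX k * dQ k) * (Complex.I • (mX j * mQ j) + mY j * dQ j))
      = Complex.I • (mX j * dX j + mY j * dY j + 1) := by
    intro j
    rw [Finset.sum_eq_single j]
    · exact diag j
    · intro k _ hk
      rw [offdiag (Ne.symm hk), sub_self]
    · intro h; exact absurd (Finset.mem_univ j) h
  rw [Finset.sum_comm]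
  simp only [this]
  rw [← Finset.smul_sum, Finset.sum_add_distrib, Finset.sum_const, Finset.card_univ,
    Fintype.card_fin, ← Eop]
  congr 1
end
end

section
/- Let n ≥ 1 and consider the operators E = Σ_{j=1}^n (x_j ∂_{x_j} + y_j ∂_{y_j}) and X_s = Σ_{j=1}^n (i x_j q_j + y_j ∂_{q_j}) acting on ℂ[x_1,…,x_n, y_1,…,y_n, q_1,…,q_n]. Then [E + n, X_s] = X_s. Consequently the operators D_s, E + n, X_s span a complex Lie algebra isomorphic to sl(2,ℂ). -/
set_option maxHeartbeats 1000000


noncomputable section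
open MvPolynomial

namespace SympDiracAux

variable {n : ℕ}

def opM (v : V3 n) : Op3 n := LinearMap.mulLeft ℂ (X v)
def opD (v : V3 n) : Op3 n := (pderiv v).toLinearMap
def br (a b : Op3 n) : Op3 n := a * b - b * a

lemma mX_eq (j : Fin n) : mX j = opM (Sum.inl j) := rfl
lemma mY_eq (j : Fin n) : mY j = opM (Sum.inr (Sum.inl j)) := rfl
lemma mQ_eq (j : Fin n) : mQ j = opM (Sum.inr (Sum.inr j)) := rfl
lemma dX_eq (j : Fin n) : dX j = opD (Sum.inl j) := rfl
lemma dY_eq (j : Fin n) : dY j = opD (Sum.inr (Sum.inl j)) := rfl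
lemma dQ_eq (j : Fin n) : dQ j = opD (Sum.inr (Sum.inr j)) := rfl

lemma pderiv_comm' (u v : V3 n) (p : R3 n) :
    pderiv u (pderiv v p) = pderiv v (pderiv u p) := by
  induction p using MvPolynomial.induction_on with
  | C a => simp
  | add p q hp hq => simp [hp, hq]
  | mul_X p s hp =>
    simp only [pderiv_mul, map_add, pderiv_X, Pi.single_apply, hp]
    split_ifs <;> subst_vars <;> simp [pderiv_one]

lemma br_sum {A B C : Fin n → Op3 n}
    (h : ∀ j k, br (A j) (B k) = if j = k then C j else 0) :
    br (∑ j, A j) (∑ j, B j) = ∑ j, C j := by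
  simp only [br] at h ⊢
  rw [Finset.sum_mul_sum, Finset.sum_mul_sum,
    Finset.sum_comm (f := fun k j => B k * A j), ← Finset.sum_sub_distrib]
  simp_rw [← Finset.sum_sub_distrib, h]
  simp

end SympDiracAux

open SympDiracAux in
/-- [E + n, X_s] = X_s; consequently D_s, E + n, X_s satisfy the sl(2,ℂ)
commutation relations. -/
theorem commutator_EplusN_Xs (n : ℕ) (hn : 1 ≤ n) :
    (Eop n + (n : Op3 n)) * Xs n - Xs n * (Eop n + (n : Op3 n)) = Xs n ∧
    (Xs n * Ds n - Ds n * Xs n = Complex.I • (Eop n + (n : Op3 n))) ∧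
    ((Eop n + (n : Op3 n)) * Ds n - Ds n * (Eop n + (n : Op3 n)) = -(Ds n)) := by
  have hcast : ∀ a : Op3 n, (Eop n + (n : Op3 n)) * a - a * (Eop n + (n : Op3 n))
      = Eop n * a - a * Eop n := by
    intro a
    have h : (n : Op3 n) * a = a * (n : Op3 n) := (Nat.cast_commute n a).eq
    noncomm_ring [h]
  have h1 : ∀ j k : Fin n,
      br (mX j * dX j + mY j * dY j) (Complex.I • (mX k * mQ k) + mY k * dQ k)
        = if j = k then Complex.I • (mX j * mQ j) + mY j * dQ j else 0 := by
    intro j k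
    rcases eq_or_ne j k with rfl | hne
    · apply LinearMap.ext; intro p
      simp [br, mX, mY, mQ, dX, dY, dQ, Module.End.mul_apply, pderiv_mul,
        Pi.single_apply, pderiv_comm', smul_eq_C_mul]
      ring
    · apply LinearMap.ext; intro p
      simp [br, mX, mY, mQ, dX, dY, dQ, Module.End.mul_apply, pderiv_mul,
        Pi.single_apply, pderiv_comm', smul_eq_C_mul, hne, Ne.symm hne]
      ring
  have h2 : ∀ j k : Fin n,
      br (Complex.I • (mX j * mQ j) + mY j * dQ j)
         (Complex.I • (mQ k * dY k) - dX k * dQ k)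
        = if j = k then Complex.I • (mX j * dX j + mY j * dY j + 1) else 0 := by
    intro j k
    rcases eq_or_ne j k with rfl | hne
    · apply LinearMap.ext; intro p
      simp [br, mX, mY, mQ, dX, dY, dQ, Module.End.mul_apply, pderiv_mul,
        Pi.single_apply, pderiv_comm', smul_eq_C_mul]
      ring
    · apply LinearMap.ext; intro p
      simp [br, mX, mY, mQ, dX, dY, dQ, Module.End.mul_apply, pderiv_mul,
        Pi.single_apply, pderiv_comm', smul_eq_C_mul, hne, Ne.symm hne]
      ring
  have h3 : ∀ j k : Fin n,
      br (mX j * dX j + mY j * dY j) (Complex.I • (mQ k * dY k) - dX k * dQ k)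
        = if j = k then dX j * dQ j - Complex.I • (mQ j * dY j) else 0 := by
    intro j k
    rcases eq_or_ne j k with rfl | hne
    · apply LinearMap.ext; intro p
      simp [br, mX, mY, mQ, dX, dY, dQ, Module.End.mul_apply, pderiv_mul,
        Pi.single_apply, pderiv_comm', smul_eq_C_mul]
      ring
    · apply LinearMap.ext; intro p
      simp [br, mX, mY, mQ, dX, dY, dQ, Module.End.mul_apply, pderiv_mul,
        Pi.single_apply, pderiv_comm', smul_eq_C_mul, hne, Ne.symm hne]
      ring
  have hone : (∑ _j : Fin n, (1 : Op3 n)) = (n : Op3 n) := by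
    simp [Finset.sum_const]
  refine ⟨?_, ?_, ?_⟩
  · rw [hcast]
    simpa [br, Eop, Xs] using br_sum h1
  · have := br_sum h2
    simp only [br, Xs, Ds, Eop] at this ⊢
    rw [this, smul_add, ← Finset.smul_sum, Finset.sum_add_distrib, hone, smul_add]
  · rw [hcast]
    have := br_sum h3
    simp only [br, Eop, Ds] at this ⊢
    rw [this]
    have hjj : ∀ j : Fin n, (dX j * dQ j - Complex.I • (mQ j * dY j))
        = -(Complex.I • (mQ j * dY j) - dX j * dQ j) := fun j => (neg_sub _ _).symm
    rw [Finset.sum_congr rfl fun j _ => hjj j, ← Finset.sum_neg_distrib]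
end
end

section
/- Let n ≥ 1, m, r ∈ ℕ₀, and let v ∈ ℂ[x_1,…,x_n, y_1,…,y_n, q_1,…,q_n] be a polynomial that is homogeneous of total degree m in the variables x_1,…,x_n, y_1,…,y_n (i.e. E v = m v where E = Σ_j (x_j∂_{x_j}+y_j∂_{y_j})) and satisfies D_s v = 0, where D_s = Σ_j (i q_j ∂_{y_j} − ∂_{x_j} ∂_{q_j}). Then D_s X_s^r v = −i · (r(2m + 2n + r − 1)/2) · X_s^{r−1} v, where X_s = Σ_j (i x_j q_j + y_j ∂_{q_j}). -/
noncomputable section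
open MvPolynomial

/-! With `H := -i (E + n)`, the operators satisfy `[D_s, X_s] = H` and `[H, X_s] = -i X_s`, the
relations of a lowering and a raising operator of `sl₂`. So `X_s^k v` is an `H`-eigenvector with
eigenvalue `-i (m + n + k)`, and commuting `D_s` through the `r` factors of `X_s^r v`, using
`D_s v = 0`, gives `D_s X_s^r v = -i ∑_{k<r} (m + n + k) X_s^{r-1} v`. -/

theorem MvPolynomial.pderiv_pderiv_comm {R σ : Type*} [CommSemiring R] (i j : σ)
    (p : MvPolynomial σ R) : pderiv i (pderiv j p) = pderiv j (pderiv i p) := by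
  classical
  induction p using MvPolynomial.induction_on with
  | C a => simp
  | add p q hp hq => simp [hp, hq]
  | mul_X p k hp =>
    simp only [pderiv_mul, map_add, hp, pderiv_X, Pi.single_apply]
    split_ifs <;> simp [add_right_comm]

theorem Finset.sum_mul_sub_mul_sum {ι R : Type*} [Ring R] (s : Finset ι) (f g : ι → R) :
    (∑ i ∈ s, f i) * (∑ j ∈ s, g j) - (∑ j ∈ s, g j) * (∑ i ∈ s, f i)
      = ∑ i ∈ s, ∑ j ∈ s, (f i * g j - g j * f i) := by
  rw [Finset.sum_mul_sum, Finset.sum_mul_sum, Finset.sum_comm (f := fun j i => g j * f i)]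
  simp only [← Finset.sum_sub_distrib]

section Commutator

variable {R M : Type*} [CommRing R] [AddCommGroup M] [Module R M]
  {D H X : Module.End R M} {a c : R} {v : M}

theorem Module.End.apply_apply_eq_of_commutator_eq {A B C : Module.End R M}
    (h : A * B - B * A = C) (v : M) : A (B v) = B (A v) + C v := by
  rw [← h, LinearMap.sub_apply, Module.End.mul_apply, Module.End.mul_apply, add_sub_cancel]

theorem Module.End.apply_pow_apply_of_commutator_eq_smul (hHX : H * X - X * H = a • X)
    (hv : H v = c • v) (r : ℕ) : H ((X ^ r) v) = (c + r * a) • (X ^ r) v := by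
  induction r with
  | zero => simpa using hv
  | succ r ih =>
    rw [pow_succ', Module.End.mul_apply, apply_apply_eq_of_commutator_eq hHX, ih, map_smul,
      LinearMap.smul_apply, ← add_smul]
    congr 1
    push_cast
    ring

theorem Module.End.apply_pow_succ_apply_of_commutator_eq (hDX : D * X - X * D = H)
    (hHX : H * X - X * H = a • X) (hv : H v = c • v) (hD : D v = 0) (r : ℕ) :
    D ((X ^ (r + 1)) v) = ((r + 1) * c + (r + 1).choose 2 * a) • (X ^ r) v := by
  induction r with
  | zero => simp [apply_apply_eq_of_commutator_eq hDX, hD, hv]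
  | succ r ih =>
    rw [pow_succ' X (r + 1), Module.End.mul_apply, apply_apply_eq_of_commutator_eq hDX, ih,
      map_smul, apply_pow_apply_of_commutator_eq_smul hHX hv, ← Module.End.mul_apply,
      ← pow_succ', ← add_smul, Nat.choose_succ_succ' (r + 1) 1, Nat.choose_one_right]
    congr 1
    push_cast
    ring

theorem Module.End.apply_pow_apply_of_commutator_eq (hDX : D * X - X * D = H)
    (hHX : H * X - X * H = a • X) (hv : H v = c • v) (hD : D v = 0) (r : ℕ) :
    D ((X ^ r) v) = (r * c + r.choose 2 * a) • (X ^ (r - 1)) v := by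
  cases r with
  | zero => simpa using hD
  | succ r => simpa using apply_pow_succ_apply_of_commutator_eq hDX hHX hv hD r

end Commutator

section SymplecticOperators

open Complex

variable {n : ℕ}

theorem Ds_summand_commutator_Xs_summand (j k : Fin n) :
    (I • (mQ j * dY j) - dX j * dQ j) * (I • (mX k * mQ k) + mY k * dQ k)
      - (I • (mX k * mQ k) + mY k * dQ k) * (I • (mQ j * dY j) - dX j * dQ j)
      = if j = k then (-I) • (mX j * dX j + mY j * dY j + 1) else 0 := by
  refine LinearMap.ext fun p => ?_
  simp only [LinearMap.sub_apply, LinearMap.add_apply, Module.End.mul_apply,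
    LinearMap.smul_apply, mX, mY, mQ, dX, dY, dQ]
  split_ifs with h
  · subst h
    simp only [LinearMap.mulLeft_apply, smul_eq_C_mul, Derivation.coeFn_coe, map_add,
      Derivation.leibniz, smul_eq_mul, pderiv_X, ne_eq, Sum.inr.injEq, reduceCtorEq,
      not_false_eq_true, Pi.single_eq_of_ne, mul_zero, add_zero, derivation_C, Pi.single_eq_same,
      mul_one, map_sub, smul_add, neg_smul, LinearMap.add_apply, LinearMap.neg_apply,
      LinearMap.smul_apply, Module.End.mul_apply, Module.End.one_apply]
    -- `ring` sees `∂_a ∂_b p` and `∂_b ∂_a p` as unrelated atoms, so fix one order first.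
    simp only [pderiv_pderiv_comm (Sum.inl j) (Sum.inr (Sum.inr j)),
      pderiv_pderiv_comm (Sum.inr (Sum.inl j)) (Sum.inr (Sum.inr j))]
    ring
  · simp only [LinearMap.mulLeft_apply, smul_eq_C_mul, Derivation.coeFn_coe, map_add,
      Derivation.leibniz, smul_eq_mul, pderiv_X, ne_eq, Sum.inr.injEq, reduceCtorEq,
      not_false_eq_true, Pi.single_eq_of_ne, mul_zero, add_zero, derivation_C, Sum.inl.injEq,
      Ne.symm h, map_sub, h, LinearMap.zero_apply]
    simp only [pderiv_pderiv_comm (Sum.inl j) (Sum.inr (Sum.inr j)),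
      pderiv_pderiv_comm (Sum.inl j) (Sum.inr (Sum.inr k)),
      pderiv_pderiv_comm (Sum.inr (Sum.inl j)) (Sum.inr (Sum.inr k)),
      pderiv_pderiv_comm (Sum.inr (Sum.inr j)) (Sum.inr (Sum.inr k))]
    ring

theorem Eop_summand_commutator_Xs_summand (j k : Fin n) :
    (mX j * dX j + mY j * dY j) * (I • (mX k * mQ k) + mY k * dQ k)
      - (I • (mX k * mQ k) + mY k * dQ k) * (mX j * dX j + mY j * dY j)
      = if j = k then I • (mX j * mQ j) + mY j * dQ j else 0 := by
  refine LinearMap.ext fun p => ?_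
  simp only [LinearMap.sub_apply, LinearMap.add_apply, Module.End.mul_apply,
    LinearMap.smul_apply, mX, mY, mQ, dX, dY, dQ]
  split_ifs with h
  · subst h
    simp only [LinearMap.mulLeft_apply, smul_eq_C_mul, Derivation.coeFn_coe, map_add,
      Derivation.leibniz, smul_eq_mul, pderiv_X, ne_eq, reduceCtorEq, not_false_eq_true,
      Pi.single_eq_of_ne, mul_zero, add_zero, Pi.single_eq_same, mul_one, derivation_C,
      Sum.inr.injEq, LinearMap.add_apply, LinearMap.smul_apply, Module.End.mul_apply]
    simp only [pderiv_pderiv_comm (Sum.inl j) (Sum.inr (Sum.inr j)),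
      pderiv_pderiv_comm (Sum.inr (Sum.inl j)) (Sum.inr (Sum.inr j))]
    ring
  · simp only [LinearMap.mulLeft_apply, smul_eq_C_mul, Derivation.coeFn_coe, map_add,
      Derivation.leibniz, smul_eq_mul, pderiv_X, ne_eq, reduceCtorEq, not_false_eq_true,
      Pi.single_eq_of_ne, mul_zero, add_zero, Sum.inl.injEq, Ne.symm h, derivation_C, Sum.inr.injEq,
      LinearMap.zero_apply]
    simp only [pderiv_pderiv_comm (Sum.inl j) (Sum.inr (Sum.inr k)),
      pderiv_pderiv_comm (Sum.inr (Sum.inl j)) (Sum.inr (Sum.inr k))]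
    ring

theorem Ds_commutator_Xs : Ds n * Xs n - Xs n * Ds n = (-I) • (Eop n + (n : ℂ) • 1) := by
  rw [Ds, Xs, Finset.sum_mul_sub_mul_sum]
  simp only [Ds_summand_commutator_Xs_summand, Finset.sum_ite_eq, Finset.mem_univ, if_true,
    ← Finset.smul_sum, Finset.sum_add_distrib, Finset.sum_const, Finset.card_univ,
    Fintype.card_fin, Nat.cast_smul_eq_nsmul, Eop]

theorem Eop_commutator_Xs : Eop n * Xs n - Xs n * Eop n = Xs n := by
  rw [Eop, Xs, Finset.sum_mul_sub_mul_sum]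
  simp only [Eop_summand_commutator_Xs_summand, Finset.sum_ite_eq, Finset.mem_univ, if_true]

end SymplecticOperators

theorem Ds_Xs_pow_general (n : ℕ) (m r : ℕ) (v : R3 n)
    (hhom : Eop n v = (m : ℂ) • v) (hker : Ds n v = 0) :
    Ds n ((Xs n ^ r) v)
      = (-(Complex.I) * ((r : ℂ) * (2 * (m : ℂ) + 2 * (n : ℂ) + (r : ℂ) - 1)) / 2)
          • (Xs n ^ (r - 1)) v := by
  set H : Op3 n := (-Complex.I) • (Eop n + (n : ℂ) • 1)
  have hHX : H * Xs n - Xs n * H = (-Complex.I) • Xs n := by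
    conv_rhs => rw [← Eop_commutator_Xs]
    simp only [H, smul_mul_assoc, mul_smul_comm, add_mul, mul_add, one_mul, mul_one, smul_sub,
      smul_add]
    abel
  have hHv : H v = (-Complex.I * (m + n)) • v := by
    simp only [H, LinearMap.smul_apply, LinearMap.add_apply, hhom, Module.End.one_apply, smul_smul,
      ← add_smul]
  rw [Module.End.apply_pow_apply_of_commutator_eq Ds_commutator_Xs hHX hHv hker r,
    Nat.cast_choose_two]
  congr 1
  ring

/-- If E v = m v and D_s v = 0, then
D_s X_s^r v = −i (r(2m+2n+r−1)/2) X_s^{r−1} v. -/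
theorem Ds_Xs_pow (n : ℕ) (hn : 1 ≤ n) (m r : ℕ) (v : R3 n)
    (hhom : Eop n v = (m : ℂ) • v) (hker : Ds n v = 0) :
    Ds n ((Xs n ^ r) v)
      = (-(Complex.I) * ((r : ℂ) * (2 * (m : ℂ) + 2 * (n : ℂ) + (r : ℂ) - 1)) / 2)
          • (Xs n ^ (r - 1)) v :=
  Ds_Xs_pow_general n m r v hhom hker
end
end

section
/- Let n ≥ 1, m, r ∈ ℕ₀, i ∈ {1,…,n}, and let v ∈ ℂ[x_1,…,x_n, y_1,…,y_n, q_1,…,q_n]. With X_s = Σ_j (i x_j q_j + y_j ∂_{q_j}), one has ∂_{x_i} X_s^r v = i r q_i X_s^{r−1} v + i (r(r−1)/2) y_i X_s^{r−2} v + X_s^r ∂_{x_i} v, with the convention that terms with negative powers of X_s are zero. -/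
noncomputable section
open MvPolynomial

lemma pderiv_comm' {n : ℕ} (a b : V3 n) (f : R3 n) :
    pderiv a (pderiv b f) = pderiv b (pderiv a f) := by
  induction f using MvPolynomial.induction_on with
  | C c => simp
  | add p q hp hq => simp [hp, hq]
  | mul_X p s hp =>
    simp [pderiv_mul, hp, Pi.single_apply, apply_ite (pderiv a), apply_ite (pderiv b)]
    try ring

lemma dXmX {n : ℕ} (i j : Fin n) :
    dX i * mX j = mX j * dX i + (if j = i then 1 else 0) := by
  refine LinearMap.ext fun v => ?_
  by_cases h : j = i
  · simp [h, dX, mX, Module.End.mul_apply, pderiv_mul]; try ring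
  · simp [h, dX, mX, Module.End.mul_apply, pderiv_mul, mul_comm, Ne.symm, Sum.inl.injEq]

lemma dXmY' {n : ℕ} (i j : Fin n) : dX i * mY j = mY j * dX i := by
  refine LinearMap.ext fun v => ?_; simp [dX, mY, Module.End.mul_apply, pderiv_mul, mul_comm]

lemma dXmQ' {n : ℕ} (i j : Fin n) : dX i * mQ j = mQ j * dX i := by
  refine LinearMap.ext fun v => ?_; simp [dX, mQ, Module.End.mul_apply, pderiv_mul, mul_comm]

lemma dXdQ' {n : ℕ} (i j : Fin n) : dX i * dQ j = dQ j * dX i := by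
  refine LinearMap.ext fun v => ?_; exact pderiv_comm' _ _ v

lemma XsmQ {n : ℕ} (i j : Fin n) :
    (Complex.I • (mX j * mQ j) + mY j * dQ j) * mQ i
      = mQ i * (Complex.I • (mX j * mQ j) + mY j * dQ j) + (if j = i then mY i else 0) := by
  refine LinearMap.ext fun v => ?_
  by_cases h : j = i <;>
    simp [h, mX, mY, mQ, dQ, Module.End.mul_apply, pderiv_mul, Ne.symm, Sum.inr.injEq,
      smul_eq_C_mul] <;>
    try ring

lemma XsmY {n : ℕ} (i j : Fin n) :
    (Complex.I • (mX j * mQ j) + mY j * dQ j) * mY i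
      = mY i * (Complex.I • (mX j * mQ j) + mY j * dQ j) := by
  refine LinearMap.ext fun v => ?_
  simp [mX, mY, mQ, dQ, Module.End.mul_apply, pderiv_mul, smul_eq_C_mul]
  try ring

lemma dX_Xs {n : ℕ} (i : Fin n) :
    dX i * Xs n = Xs n * dX i + Complex.I • mQ i := by
  unfold Xs
  rw [Finset.mul_sum, Finset.sum_mul]
  have : ∀ j : Fin n, dX i * (Complex.I • (mX j * mQ j) + mY j * dQ j)
      = (Complex.I • (mX j * mQ j) + mY j * dQ j) * dX i
        + (if j = i then Complex.I • mQ i else 0) := by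
    intro j
    refine LinearMap.ext fun v => ?_
    by_cases h : j = i
    · simp [h, mX, mY, mQ, dX, dQ, Module.End.mul_apply, pderiv_mul, smul_eq_C_mul,
        pderiv_comm' (Sum.inl i) (Sum.inr (Sum.inr i)) v]
      try ring
    · simp [h, mX, mY, mQ, dX, dQ, Module.End.mul_apply, pderiv_mul, smul_eq_C_mul,
        Ne.symm, Sum.inl.injEq,
        pderiv_comm' (Sum.inl i) (Sum.inr (Sum.inr j)) v]
      try ring
  rw [Finset.sum_congr rfl (fun j _ => this j), Finset.sum_add_distrib,
      Finset.sum_ite_eq' Finset.univ i]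
  simp

lemma Xs_mQ {n : ℕ} (i : Fin n) : Xs n * mQ i = mQ i * Xs n + mY i := by
  unfold Xs
  rw [Finset.sum_mul, Finset.mul_sum,
      Finset.sum_congr rfl (fun j _ => XsmQ i j), Finset.sum_add_distrib,
      Finset.sum_ite_eq' Finset.univ i]
  simp

lemma Xs_mY {n : ℕ} (i : Fin n) : Xs n * mY i = mY i * Xs n := by
  unfold Xs
  rw [Finset.sum_mul, Finset.mul_sum, Finset.sum_congr rfl (fun j _ => XsmY i j)]

lemma aux2 {n : ℕ} (i : Fin n) (v : R3 n) (r : ℕ) :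
    dX i ((Xs n ^ (r + 2)) v)
      = (Complex.I * ((r : ℂ) + 2)) • mQ i ((Xs n ^ (r + 1)) v)
        + (Complex.I * (((r : ℂ) + 2) * ((r : ℂ) + 1) / 2)) • mY i ((Xs n ^ r) v)
        + (Xs n ^ (r + 2)) (dX i v) := by
  have h1 : ∀ w : R3 n, dX i (Xs n w) = Xs n (dX i w) + Complex.I • mQ i w := by
    intro w
    have := LinearMap.ext_iff.mp (dX_Xs i) w
    simpa using this
  have hQ : ∀ w : R3 n, Xs n (mQ i w) = mQ i (Xs n w) + mY i w := by
    intro w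
    have := LinearMap.ext_iff.mp (Xs_mQ i) w
    simpa using this
  have hY : ∀ w : R3 n, Xs n (mY i w) = mY i (Xs n w) := by
    intro w
    exact LinearMap.ext_iff.mp (Xs_mY i) w
  have hP : ∀ (k : ℕ) (w : R3 n), (Xs n ^ (k + 1)) w = Xs n ((Xs n ^ k) w) := by
    intro k w; rw [pow_succ', Module.End.mul_apply]
  induction r with
  | zero =>
    have e2 : ∀ w : R3 n, (Xs n ^ 2) w = Xs n (Xs n w) := by
      intro w; rw [sq, Module.End.mul_apply]
    rw [show (0 : ℕ) + 2 = 2 from rfl, show (0 : ℕ) + 1 = 1 from rfl]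
    rw [e2, h1, h1, map_add, map_smul, hQ, ← e2]
    simp only [pow_one, pow_zero, Module.End.one_apply, Nat.cast_zero]
    module
  | succ r ih =>
    rw [show r + 1 + 2 = (r + 2) + 1 from rfl, hP (r + 2), h1, ih, map_add, map_add,
        map_smul, map_smul, hQ, hY, ← hP (r + 1), ← hP r, ← hP (r + 2)]
    push_cast
    module

/-- ∂_{x_i} X_s^r v = i r q_i X_s^{r−1} v + i (r(r−1)/2) y_i X_s^{r−2} v + X_s^r ∂_{x_i} v. -/
theorem dX_Xs_pow (n : ℕ) (hn : 1 ≤ n) (r : ℕ) (i : Fin n) (v : R3 n) :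
    dX i ((Xs n ^ r) v)
      = (Complex.I * (r : ℂ)) • mQ i ((Xs n ^ (r - 1)) v)
        + (Complex.I * ((r : ℂ) * ((r : ℂ) - 1) / 2)) • mY i ((Xs n ^ (r - 2)) v)
        + (Xs n ^ r) (dX i v) := by
  
  match r with
  | 0 => simp
  | 1 =>
    have h1 : ∀ w : R3 n, dX i (Xs n w) = Xs n (dX i w) + Complex.I • mQ i w := by
      intro w
      have := LinearMap.ext_iff.mp (dX_Xs i) w
      simpa using this
    rw [show (1 : ℕ) - 1 = 0 from rfl]
    simp only [pow_one, pow_zero, Module.End.one_apply, Nat.cast_one]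
    rw [h1]
    module
  | (r + 2) =>
    rw [show r + 2 - 1 = r + 1 by omega, show r + 2 - 2 = r by omega, aux2]
    push_cast
    module
end
end

section
/- Let n = 1 and let v ∈ ℂ[x_1, y_1, q_1] satisfy D_s v = 0, where D_s = i q_1 ∂_{y_1} − ∂_{x_1}∂_{q_1}, and let X_s = i x_1 q_1 + y_1 ∂_{q_1}. Then X_s ∂_{x_1} v = i q_1 (x_1 ∂_{x_1} + y_1 ∂_{y_1}) v and X_s ∂_{y_1} v = ∂_{q_1}(x_1 ∂_{x_1} + y_1 ∂_{y_1}) v. -/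
noncomputable section
open MvPolynomial

/-- ℂ[x₁, y₁, q₁]: variable 0 = x₁, 1 = y₁, 2 = q₁. -/
abbrev R1 := MvPolynomial (Fin 3) ℂ
abbrev Op1 := Module.End ℂ R1

def mX1 : Op1 := LinearMap.mulLeft ℂ (X 0)
def mY1 : Op1 := LinearMap.mulLeft ℂ (X 1)
def mQ1 : Op1 := LinearMap.mulLeft ℂ (X 2)
def dX1 : Op1 := (pderiv (0 : Fin 3)).toLinearMap
def dY1 : Op1 := (pderiv (1 : Fin 3)).toLinearMap
def dQ1 : Op1 := (pderiv (2 : Fin 3)).toLinearMap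

/-- D_s = i q₁ ∂_{y₁} − ∂_{x₁} ∂_{q₁}. -/
def Ds1 : Op1 := Complex.I • (mQ1 * dY1) - dX1 * dQ1
/-- X_s = i x₁ q₁ + y₁ ∂_{q₁}. -/
def Xs1 : Op1 := Complex.I • (mX1 * mQ1) + mY1 * dQ1

lemma pderiv_comm'_s14 (i j : Fin 3) (v : R1) :
    pderiv i (pderiv j v) = pderiv j (pderiv i v) := by
  induction v using MvPolynomial.induction_on with
  | C a => simp
  | add p q hp hq => simp [hp, hq]
  | mul_X p k hp =>
      simp only [pderiv_mul, pderiv_X, map_add, hp]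
      by_cases h1 : i = k <;> by_cases h2 : j = k <;>
        simp [h1, h2, Pi.single_apply, pderiv_mul, pderiv_X]

lemma dcomm20 (v : R1) : dQ1 (dX1 v) = dX1 (dQ1 v) := pderiv_comm'_s14 2 0 v
lemma dcomm21 (v : R1) : dQ1 (dY1 v) = dY1 (dQ1 v) := pderiv_comm'_s14 2 1 v
lemma dmulX (p : R1) : dQ1 (mX1 p) = mX1 (dQ1 p) := by
  simp only [dQ1, mX1, LinearMap.mulLeft_apply, LinearMap.coe_coe]
  simp [pderiv_mul, pderiv_X, Pi.single_apply]
lemma dmulY (p : R1) : dQ1 (mY1 p) = mY1 (dQ1 p) := by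
  simp only [dQ1, mY1, LinearMap.mulLeft_apply, LinearMap.coe_coe]
  simp [pderiv_mul, pderiv_X, Pi.single_apply]
lemma mcommX (p : R1) : mX1 (mQ1 p) = mQ1 (mX1 p) := by
  simp only [mX1, mQ1, LinearMap.mulLeft_apply]; ring
lemma mcommY (p : R1) : mY1 (mQ1 p) = mQ1 (mY1 p) := by
  simp only [mY1, mQ1, LinearMap.mulLeft_apply]; ring


/-- For n = 1 and D_s v = 0:
X_s ∂_{x₁} v = i q₁ (x₁∂_{x₁}+y₁∂_{y₁}) v and
X_s ∂_{y₁} v = ∂_{q₁} (x₁∂_{x₁}+y₁∂_{y₁}) v. -/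
theorem Xs_dX_dY_n_eq_one (v : R1) (hker : Ds1 v = 0) :
    Xs1 (dX1 v) = Complex.I • mQ1 ((mX1 * dX1 + mY1 * dY1) v) ∧
    Xs1 (dY1 v) = dQ1 ((mX1 * dX1 + mY1 * dY1) v) := by

  have hker' : dX1 (dQ1 v) = Complex.I • mQ1 (dY1 v) := by
    have := hker
    simp only [Ds1, LinearMap.sub_apply, LinearMap.smul_apply, Module.End.mul_apply,
      sub_eq_zero] at this
    exact this.symm
  simp only [Xs1, LinearMap.add_apply, LinearMap.smul_apply, Module.End.mul_apply]
  constructor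
  · rw [dcomm20, hker', map_smul, map_add, smul_add, mcommX,
      show mY1 (mQ1 (dY1 v)) = mQ1 (mY1 (dY1 v)) from mcommY _]
  · rw [map_add, dmulX, dmulY, dcomm20, hker', dcomm21, map_smul, mcommX]
end
end

section
/- Let n ≥ 1, m ∈ ℕ, and let v ∈ ℂ[x_1,…,x_n, y_1,…,y_n, q_1,…,q_n] satisfy D_s v = 0 and (E_x + E_y) v = m v, where D_s = Σ_j (i q_j ∂_{y_j} − ∂_{x_j}∂_{q_j}) and E_x + E_y = Σ_j (x_j∂_{x_j} + y_j∂_{y_j}). With X_s = Σ_j (i x_j q_j + y_j ∂_{q_j}), one has Σ_{i=1}^n ∂_{q_i}(−i m q_i + X_s ∂_{x_i}) v − i Σ_{i=1}^n q_i (−m ∂_{q_i} + X_s ∂_{y_i}) v = −i (n − 1) m v. In particular, if n ≥ 2 and v ≠ 0, the left-hand side is nonzero. -/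
noncomputable section
open MvPolynomial

lemma pd_comm_s15 {n : ℕ} (a b : V3 n) (p : R3 n) :
    pderiv a (pderiv b p) = pderiv b (pderiv a p) := by
  classical
  induction p using MvPolynomial.induction_on with
  | C c => simp
  | add p q hp hq => simp [hp, hq]
  | mul_X p k hp =>
    simp only [pderiv_mul, map_add, hp, pderiv_X]
    by_cases hb : b = k <;> by_cases ha : a = k <;>
      simp [hb, ha, Pi.single_apply, pderiv_mul, hp]

lemma dQ_mQ {n : ℕ} (i : Fin n) (p : R3 n) : dQ i (mQ i p) = mQ i (dQ i p) + p := by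
  simp [dQ, mQ, pderiv_mul]

lemma dQ_Xs {n : ℕ} (i : Fin n) (p : R3 n) :
    dQ i (Xs n p) = Xs n (dQ i p) + Complex.I • (mX i p) := by
  classical
  have key : ∀ j : Fin n,
      dQ i ((Complex.I • (mX j * mQ j) + mY j * dQ j) p)
        = (Complex.I • (mX j * mQ j) + mY j * dQ j) (dQ i p)
          + (if j = i then Complex.I • (mX i p) else 0) := by
    intro j
    by_cases h : j = i
    · subst h
      rw [if_pos rfl]
      simp only [LinearMap.add_apply, LinearMap.smul_apply, Module.End.mul_apply,
        mX, mY, mQ, dQ, LinearMap.mulLeft_apply, Derivation.coeFn_coe,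
        map_add, map_smul, pderiv_mul, pderiv_X_self,
        pderiv_X_of_ne (by simp : (Sum.inl j : V3 n) ≠ Sum.inr (Sum.inr j)),
        pderiv_X_of_ne (by simp : (Sum.inr (Sum.inl j) : V3 n) ≠ Sum.inr (Sum.inr j))]
      rw [smul_eq_C_mul, smul_eq_C_mul, smul_eq_C_mul]
      ring
    · rw [if_neg h, add_zero]
      simp only [LinearMap.add_apply, LinearMap.smul_apply,
        Module.End.mul_apply, mX, mY, mQ, dQ, LinearMap.mulLeft_apply,
        Derivation.coeFn_coe, map_add, map_smul, pderiv_mul,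
        pderiv_X_of_ne (by simp : (Sum.inl j : V3 n) ≠ Sum.inr (Sum.inr i)),
        pderiv_X_of_ne (by simp [h] : (Sum.inr (Sum.inr j) : V3 n) ≠ Sum.inr (Sum.inr i)),
        pderiv_X_of_ne (by simp : (Sum.inr (Sum.inl j) : V3 n) ≠ Sum.inr (Sum.inr i))]
      rw [pd_comm_s15, smul_eq_C_mul, smul_eq_C_mul]
      ring
  calc dQ i (Xs n p) = ∑ j : Fin n, dQ i ((Complex.I • (mX j * mQ j) + mY j * dQ j) p) := by
        rw [Xs, LinearMap.sum_apply, map_sum]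
    _ = ∑ j : Fin n, ((Complex.I • (mX j * mQ j) + mY j * dQ j) (dQ i p)
          + (if j = i then Complex.I • (mX i p) else 0)) :=
        Finset.sum_congr rfl fun j _ => key j
    _ = Xs n (dQ i p) + Complex.I • (mX i p) := by
        rw [Finset.sum_add_distrib, Finset.sum_ite_eq' Finset.univ i, if_pos (Finset.mem_univ i),
          Xs, LinearMap.sum_apply]

lemma mQ_Xs {n : ℕ} (i : Fin n) (p : R3 n) :
    mQ i (Xs n p) = Xs n (mQ i p) - mY i p := by
  classical
  have key : ∀ j : Fin n,
      (Complex.I • (mX j * mQ j) + mY j * dQ j) (mQ i p)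
        = mQ i ((Complex.I • (mX j * mQ j) + mY j * dQ j) p)
          + (if j = i then (mY i p : R3 n) else 0) := by
    intro j
    by_cases h : j = i
    · subst h
      rw [if_pos rfl]
      simp only [LinearMap.add_apply, LinearMap.smul_apply, Module.End.mul_apply,
        mX, mY, mQ, dQ, LinearMap.mulLeft_apply, Derivation.coeFn_coe, pderiv_mul,
        pderiv_X_self]
      rw [smul_eq_C_mul, smul_eq_C_mul]
      ring
    · rw [if_neg h, add_zero]
      simp only [LinearMap.add_apply, LinearMap.smul_apply,
        Module.End.mul_apply, mX, mY, mQ, dQ, LinearMap.mulLeft_apply, Derivation.coeFn_coe,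
        pderiv_mul,
        pderiv_X_of_ne (by simpa using Ne.symm h : (Sum.inr (Sum.inr i) : V3 n) ≠ Sum.inr (Sum.inr j))]
      rw [smul_eq_C_mul, smul_eq_C_mul]
      ring
  have h1 : Xs n (mQ i p) = ∑ j : Fin n, ((Complex.I • (mX j * mQ j) + mY j * dQ j) (mQ i p)) := by
    rw [Xs, LinearMap.sum_apply]
  have h2 : mQ i (Xs n p) = ∑ j : Fin n, mQ i ((Complex.I • (mX j * mQ j) + mY j * dQ j) p) := by
    rw [Xs, LinearMap.sum_apply, map_sum]
  rw [h1, Finset.sum_congr rfl fun j _ => key j, Finset.sum_add_distrib,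
    Finset.sum_ite_eq' Finset.univ i, if_pos (Finset.mem_univ i), ← h2]
  ring

/-- If D_s v = 0 and (E_x+E_y) v = m v then
Σ_i ∂_{q_i}(−i m q_i + X_s ∂_{x_i}) v − i Σ_i q_i (−m ∂_{q_i} + X_s ∂_{y_i}) v
= −i (n−1) m v; in particular this is nonzero for n ≥ 2 and v ≠ 0. -/
theorem twistor_obstruction (n : ℕ) (hn : 1 ≤ n) (m : ℕ) (hm : 1 ≤ m)
    (v : R3 n) (hker : Ds n v = 0) (hhom : Eop n v = (m : ℂ) • v) :
    (∑ i : Fin n, dQ i ((-(Complex.I) * (m : ℂ)) • mQ i v + Xs n (dX i v)))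
      - Complex.I • (∑ i : Fin n, mQ i ((-(m : ℂ)) • dQ i v + Xs n (dY i v)))
      = (-(Complex.I) * ((n : ℂ) - 1) * (m : ℂ)) • v ∧
    (2 ≤ n → v ≠ 0 →
      (∑ i : Fin n, dQ i ((-(Complex.I) * (m : ℂ)) • mQ i v + Xs n (dX i v)))
        - Complex.I • (∑ i : Fin n, mQ i ((-(m : ℂ)) • dQ i v + Xs n (dY i v)))
        ≠ 0) := by
  classical
  set A := ∑ i : Fin n, mQ i (dQ i v) with hA
  set B := ∑ i : Fin n, dQ i (dX i v) with hBdef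
  set Cs := ∑ i : Fin n, mQ i (dY i v) with hCdef
  set Ex := ∑ i : Fin n, mX i (dX i v) with hEx
  set Ey := ∑ i : Fin n, mY i (dY i v) with hEy
  -- Dirac condition
  have hB : B - Complex.I • Cs = 0 := by
    have h := hker
    rw [Ds, LinearMap.sum_apply] at h
    simp only [LinearMap.sub_apply, LinearMap.smul_apply, Module.End.mul_apply] at h
    rw [Finset.sum_sub_distrib] at h
    have hc : ∀ i : Fin n, dX i (dQ i v) = dQ i (dX i v) := fun i => pd_comm_s15 _ _ v
    rw [Finset.sum_congr rfl (fun i _ => hc i), ← Finset.smul_sum] at h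
    rw [← hBdef, ← hCdef] at h
    rw [sub_eq_zero.mp h, sub_self]
  -- Euler condition
  have hE : Ex + Ey = (m : ℂ) • v := by
    have h := hhom
    rw [Eop, LinearMap.sum_apply] at h
    simp only [LinearMap.add_apply, Module.End.mul_apply] at h
    rw [Finset.sum_add_distrib, ← hEx, ← hEy] at h
    exact h
  -- first sum
  have t1 : (∑ i : Fin n, dQ i ((-(Complex.I) * (m : ℂ)) • mQ i v + Xs n (dX i v)))
      = (-(Complex.I) * (m : ℂ)) • A + (n : ℂ) • ((-(Complex.I) * (m : ℂ)) • v)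
        + Xs n B + Complex.I • Ex := by
    have step : ∀ i : Fin n, dQ i ((-(Complex.I) * (m : ℂ)) • mQ i v + Xs n (dX i v))
        = (-(Complex.I) * (m : ℂ)) • (mQ i (dQ i v)) + (-(Complex.I) * (m : ℂ)) • v
          + Xs n (dQ i (dX i v)) + Complex.I • (mX i (dX i v)) := by
      intro i
      rw [map_add, map_smul, dQ_mQ, dQ_Xs]
      module
    rw [Finset.sum_congr rfl (fun i _ => step i)]
    simp only [Finset.sum_add_distrib, ← Finset.smul_sum, ← hA, ← hBdef, ← hEx, ← map_sum,
      Finset.sum_const, Finset.card_univ, Fintype.card_fin]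
    module
  -- second sum
  have t2 : (∑ i : Fin n, mQ i ((-(m : ℂ)) • dQ i v + Xs n (dY i v)))
      = (-(m : ℂ)) • A + Xs n Cs - Ey := by
    have step : ∀ i : Fin n, mQ i ((-(m : ℂ)) • dQ i v + Xs n (dY i v))
        = (-(m : ℂ)) • (mQ i (dQ i v)) + Xs n (mQ i (dY i v)) - mY i (dY i v) := by
      intro i
      rw [map_add, map_smul, mQ_Xs]
      module
    rw [Finset.sum_congr rfl (fun i _ => step i), Finset.sum_sub_distrib,
      Finset.sum_add_distrib, ← Finset.smul_sum, ← map_sum]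
  have hXs : Xs n B - Complex.I • Xs n Cs = 0 := by
    rw [← map_smul, ← map_sub, hB, map_zero]
  have expand : (-(Complex.I) * (m : ℂ)) • A + (n : ℂ) • ((-(Complex.I) * (m : ℂ)) • v)
      + Xs n B + Complex.I • Ex
      - Complex.I • ((-(m : ℂ)) • A + Xs n Cs - Ey)
      = (Xs n B - Complex.I • Xs n Cs) + (n : ℂ) • ((-(Complex.I) * (m : ℂ)) • v)
        + Complex.I • (Ex + Ey) := by module
  have main : (∑ i : Fin n, dQ i ((-(Complex.I) * (m : ℂ)) • mQ i v + Xs n (dX i v)))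
      - Complex.I • (∑ i : Fin n, mQ i ((-(m : ℂ)) • dQ i v + Xs n (dY i v)))
      = (-(Complex.I) * ((n : ℂ) - 1) * (m : ℂ)) • v := by
    rw [t1, t2, expand, hXs, hE, zero_add]
    have : (n : ℂ) • ((-(Complex.I) * (m : ℂ)) • v) + Complex.I • ((m : ℂ) • v)
        = (-(Complex.I) * ((n : ℂ) - 1) * (m : ℂ)) • v := by
      match_scalars
      ring
    rw [this]
  refine ⟨main, fun hn2 hv => ?_⟩
  rw [main]
  have hcoef : (-(Complex.I) * ((n : ℂ) - 1) * (m : ℂ)) ≠ 0 := by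
    apply mul_ne_zero (mul_ne_zero (by simpa using Complex.I_ne_zero) ?_)
      (Nat.cast_ne_zero.mpr (by omega))
    intro h
    have hn1 : (n : ℂ) = 1 := by linear_combination h
    have : n = 1 := by exact_mod_cast hn1
    omega
  exact smul_ne_zero hcoef hv
end
end
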